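/- Let G be the trivalent Le-graph of the totally positive Schubert cell of shape λ, let M be a marking of G, and let C be a nonempty connected component of M. Then C has triangular shape: the rows of λ containing white vertices of C form a set of consecutive rows; in each such row the white vertices of C are consecutive white vertices of that row; and whenever rows i and i+1 both contain white vertices of C, the number of white vertices of C in row i+1 is strictly smaller than the number of white vertices of C in row i. -/
import Mathlib


/-!
A concrete combinatorial model of the trivalent Le-graph `G` of the totally positive
Schubert cell of shape `μ` (a nonempty Young diagram, rows and columns indexed from `0`).

In the fully filled Le-tableau every box `(i,j)` of `μ` carries an internal vertex of the
Le-network; after removing the (unique) bivalent vertex at the box `(0,0)` and splitting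
every four-valent vertex into an adjacent white/black pair of trivalent vertices, the box
`(i,j)` contributes a white vertex `white i j` when `j ≥ 1` and a black vertex `black i j`
when `i ≥ 1`.  Each remaining trivalent vertex is white iff it has exactly one incoming
edge, and black iff it has exactly one outgoing edge (horizontal edges are oriented
right-to-left, vertical edges downward).  `bsource i` is the boundary vertex attached to
the right end of row `i` and `bsink j` the boundary vertex attached to the bottom of
column `j`.
-/

namespace LeGraph

/-- Vertices of the trivalent Le-graph (internal and boundary). -/
inductive V : Type
  | white (i j : ℕ)
  | black (i j : ℕ)
  | bsource (i : ℕ)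
  | bsink (j : ℕ)
deriving DecidableEq

/-- Internal vertices. -/
def V.isInternal : V → Prop
  | white _ _ => True
  | black _ _ => True
  | _ => False

/-- Boundary vertices. -/
def V.isBoundary : V → Prop
  | bsource _ => True
  | bsink _ => True
  | _ => False

/-- White vertices. -/
def V.isWhite : V → Prop
  | white _ _ => True
  | _ => False

/-- Black vertices. -/
def V.isBlack : V → Prop
  | black _ _ => True
  | _ => False

/-- The row of the Young diagram an internal vertex lies in (junk value for sinks). -/
def V.row : V → ℕ
  | white i _ => i
  | black i _ => i
  | bsource i => i
  | bsink _ => 0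

variable (μ : YoungDiagram)

/-- The vertices actually occurring in the Le-graph of shape `μ`. -/
def Valid : V → Prop
  | .white i j => (i, j) ∈ μ ∧ 1 ≤ j
  | .black i j => (i, j) ∈ μ ∧ 1 ≤ i
  | .bsource i => (i, 0) ∈ μ
  | .bsink j => (0, j) ∈ μ

/-- The (oriented, listed once) edges of the Le-graph of shape `μ`:
* `link`: the new edge joining the white/black pair obtained by splitting the four-valent
  vertex of the box `(i,j)`, `i,j ≥ 1`;
* `horiz`: the horizontal edge joining the boxes `(i,j)` and `(i,j+1)` of row `i ≥ 1`;
* `horizTop`: the horizontal edge joining the boxes `(0,j)` and `(0,j+1)` of the top row;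
* `mergedEdge`: the edge through the removed bivalent vertex of the box `(0,0)`;
* `vert`/`vertLeft`: the vertical edge joining the boxes `(i,j)` and `(i+1,j)`;
* `sourceEdge`/`sourceTop`/`sourceMerged`: the edge joining the rightmost box of a row to
  its boundary source vertex;
* `sinkEdge`/`sinkLeft`/`sinkMerged`: the edge joining the lowest box of a column to its
  boundary sink vertex;
* `singleBox`: the degenerate case where `μ` consists of the single box `(0,0)`. -/
inductive AdjAux : V → V → Prop
  | link {i j : ℕ} (h : (i, j) ∈ μ) (hi : 1 ≤ i) (hj : 1 ≤ j) :
      AdjAux (.white i j) (.black i j)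
  | horiz {i j : ℕ} (h : (i, j + 1) ∈ μ) (hi : 1 ≤ i) :
      AdjAux (.black i j) (.white i (j + 1))
  | horizTop {j : ℕ} (h : (0, j + 1) ∈ μ) (hj : 1 ≤ j) :
      AdjAux (.white 0 j) (.white 0 (j + 1))
  | mergedEdge (h0 : (0, 1) ∈ μ) (h1 : (1, 0) ∈ μ) :
      AdjAux (.white 0 1) (.black 1 0)
  | vert {i j : ℕ} (h : (i + 1, j) ∈ μ) (hj : 1 ≤ j) :
      AdjAux (.white i j) (.black (i + 1) j)
  | vertLeft {i : ℕ} (h : (i + 1, 0) ∈ μ) (hi : 1 ≤ i) :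
      AdjAux (.black i 0) (.black (i + 1) 0)
  | sourceEdge {i j : ℕ} (h : (i, j) ∈ μ) (h' : (i, j + 1) ∉ μ) (hi : 1 ≤ i) :
      AdjAux (.black i j) (.bsource i)
  | sourceTop {j : ℕ} (h : (0, j) ∈ μ) (h' : (0, j + 1) ∉ μ) (hj : 1 ≤ j) :
      AdjAux (.white 0 j) (.bsource 0)
  | sourceMerged (h : (0, 1) ∉ μ) (h1 : (1, 0) ∈ μ) :
      AdjAux (.black 1 0) (.bsource 0)
  | sinkEdge {i j : ℕ} (h : (i, j) ∈ μ) (h' : (i + 1, j) ∉ μ) (hj : 1 ≤ j) :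
      AdjAux (.white i j) (.bsink j)
  | sinkLeft {i : ℕ} (h : (i, 0) ∈ μ) (h' : (i + 1, 0) ∉ μ) (hi : 1 ≤ i) :
      AdjAux (.black i 0) (.bsink 0)
  | sinkMerged (h : (1, 0) ∉ μ) (h0 : (0, 1) ∈ μ) :
      AdjAux (.white 0 1) (.bsink 0)
  | singleBox (h : (0, 0) ∈ μ) (h1 : (0, 1) ∉ μ) (h2 : (1, 0) ∉ μ) :
      AdjAux (.bsource 0) (.bsink 0)

/-- Two vertices are directly connected iff they are joined by an edge of `G`. -/
def Adj (u v : V) : Prop := AdjAux μ u v ∨ AdjAux μ v u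

/-- An internal vertex is directly connected to the boundary iff it is joined by an edge
of `G` to a boundary vertex. -/
def ConnectedToBoundary (v : V) : Prop := ∃ b : V, b.isBoundary ∧ Adj μ v b

/-- A marking of the Le-graph of shape `μ`: a set `M` of (valid) internal vertices such
that (i) every black vertex directly connected to a white vertex of `M` belongs to `M`;
(ii) every white vertex directly connected to at least two vertices of `M` belongs to `M`;
(iii) no white vertex of the top row, and no white vertex that is leftmost among the white
vertices of its row (i.e. in column `1`), belongs to `M`. -/
structure IsMarking (M : Set V) : Prop where
  internal : ∀ v ∈ M, v.isInternal ∧ Valid μ v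
  black_mem : ∀ w ∈ M, w.isWhite → ∀ b : V, b.isBlack → Valid μ b → Adj μ b w → b ∈ M
  white_mem : ∀ w : V, w.isWhite → Valid μ w →
      (∃ u ∈ M, ∃ v ∈ M, u ≠ v ∧ Adj μ w u ∧ Adj μ w v) → w ∈ M
  top_row : ∀ j : ℕ, V.white 0 j ∉ M
  leftmost : ∀ i : ℕ, V.white i 1 ∉ M

/-- Adjacency within a set `M` of vertices (for the subgraph of `G` induced by `M`). -/
def AdjIn (M : Set V) (u v : V) : Prop := u ∈ M ∧ v ∈ M ∧ Adj μ u v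

/-- `C` is a connected component of the subgraph of `G` induced by `M`:
`C ⊆ M`, any two vertices of `C` are joined by a path inside `M`, and `C` is closed under
adjacency inside `M`. -/
def IsConnComp (M C : Set V) : Prop :=
  C ⊆ M ∧ (∀ u ∈ C, ∀ v ∈ C, Relation.ReflTransGen (AdjIn μ M) u v) ∧
    ∀ u ∈ C, ∀ v : V, AdjIn μ M u v → v ∈ C

/-- The faces of the Le-graph of shape `μ`:
* `box i j` (for `(i,j) ∈ μ`, `i,j ≥ 1`): the internal face whose bottom-right corner box
  is `(i,j)` (bounded by the wires of rows `i-1`, `i` and columns `j-1`, `j`);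
* `corner i`: the face between the source edge of row `i` and the next boundary edge;
* `col j` (for `j ≥ 1`): the face between the sink edge of column `j` and the next
  boundary edge;
* `outer`: the unbounded face (whose boundary contains the top row and leftmost column). -/
inductive Face : Type
  | box (i j : ℕ)
  | corner (i : ℕ)
  | col (j : ℕ)
  | outer
deriving DecidableEq

/-- The faces actually occurring in the Le-graph of shape `μ`. -/
def FaceValid : Face → Prop
  | .box i j => (i, j) ∈ μ ∧ 1 ≤ i ∧ 1 ≤ j
  | .corner i => (i, 0) ∈ μ
  | .col j => (0, j) ∈ μ ∧ 1 ≤ j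
  | .outer => True

open Classical in
/-- The set of internal vertices lying on the boundary of a face. -/
noncomputable def FaceBdry : Face → Set V
  | .box i j =>
      {v | Valid μ v ∧ (v = .white (i - 1) (j - 1) ∨ v = .black (i - 1) (j - 1) ∨
        v = .white (i - 1) j ∨ v = .black i (j - 1) ∨ v = .white i j ∨ v = .black i j)}
  | .corner i =>
      if (i + 1, μ.rowLen i - 1) ∈ μ then
        {v | Valid μ v ∧ (v = .black i (μ.rowLen i - 1) ∨ v = .white i (μ.rowLen i - 1) ∨
          v = .black (i + 1) (μ.rowLen i - 1))}
      else
        {v | Valid μ v ∧ (v = .white i (μ.rowLen i - 1) ∨ v = .black i (μ.rowLen i - 1))}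
  | .col j =>
      if (μ.colLen j, j - 1) ∈ μ then
        {v | Valid μ v ∧ (v = .white (μ.colLen j - 1) j ∨ v = .black (μ.colLen j - 1) (j - 1) ∨
          v = .white (μ.colLen j - 1) (j - 1) ∨ v = .black (μ.colLen j) (j - 1))}
      else
        {v | Valid μ v ∧ (v = .white (μ.colLen j - 1) j ∨ v = .black (μ.colLen j - 1) (j - 1) ∨
          v = .white (μ.colLen j - 1) (j - 1))}
  | .outer => {v | Valid μ v ∧ ((∃ j, v = .white 0 j) ∨ (∃ i, v = .black i 0))}

/-- A face is internal to a set `S` of internal vertices iff every internal vertex on its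
boundary belongs to `S`. -/
def FaceInternalTo (S : Set V) (f : Face) : Prop := ∀ v ∈ FaceBdry μ f, v ∈ S

/-- A face lies between rows `i` and `i+1` iff all internal vertices on its boundary
belong to rows `i` and `i+1`. -/
def FaceBetween (i : ℕ) (f : Face) : Prop := ∀ v ∈ FaceBdry μ f, v.row = i ∨ v.row = i + 1


/-! ### Auxiliary development for the proof of `component_triangular` -/

section Aux

variable {μ : YoungDiagram} {M C : Set V}

/-- Coordinates of white vertices belonging to `C`. -/
def WCo (C : Set V) (p : ℕ × ℕ) : Prop := V.white p.1 p.2 ∈ C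

/-- King-move relation on coordinates (including equality). -/
def Drel (a b : ℕ × ℕ) : Prop :=
  (a.1 = b.1 ∧ (a.2 = b.2 ∨ a.2 + 1 = b.2 ∨ b.2 + 1 = a.2)) ∨
  (b.1 = a.1 + 1 ∧ (b.2 = a.2 ∨ b.2 = a.2 + 1)) ∨
  (a.1 = b.1 + 1 ∧ (a.2 = b.2 ∨ a.2 = b.2 + 1))

/-- King steps within the white vertices of `C`. -/
def Kst (C : Set V) (a b : ℕ × ℕ) : Prop := WCo C a ∧ WCo C b ∧ Drel a b

theorem adj_symm {u v : V} (h : Adj μ u v) : Adj μ v u := Or.symm h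

theorem wfacts (hM : IsMarking μ M) (hC : IsConnComp μ M C) {i j : ℕ}
    (h : V.white i j ∈ C) : (i, j) ∈ μ ∧ 1 ≤ i ∧ 2 ≤ j := by
  have hMem : V.white i j ∈ M := hC.1 h
  have hv : (i, j) ∈ μ ∧ 1 ≤ j := (hM.internal _ hMem).2
  have hi : i ≠ 0 := fun hi => hM.top_row j (hi ▸ hMem)
  have hj : j ≠ 1 := fun hj => hM.leftmost i (hj ▸ hMem)
  exact ⟨hv.1, by omega, by omega⟩

/-- push a black neighbour of a white vertex of `C` into `C`. -/
theorem black_push (hM : IsMarking μ M) (hC : IsConnComp μ M C) {i j p q : ℕ}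
    (h : V.white i j ∈ C) (hval : (p, q) ∈ μ ∧ 1 ≤ p)
    (hadj : Adj μ (V.white i j) (V.black p q)) : V.black p q ∈ C := by
  have hMem : V.white i j ∈ M := hC.1 h
  have hb : V.black p q ∈ M :=
    hM.black_mem _ hMem trivial _ trivial hval (adj_symm hadj)
  exact hC.2.2 _ h _ ⟨hMem, hb, hadj⟩

theorem black_left (hM : IsMarking μ M) (hC : IsConnComp μ M C) {i k : ℕ}
    (h : V.white i (k + 1) ∈ C) : V.black i k ∈ C := by
  obtain ⟨hμm, hi, hj⟩ := wfacts hM hC h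
  exact black_push hM hC h ⟨μ.up_left_mem le_rfl (by omega) hμm, hi⟩
    (Or.inr (AdjAux.horiz hμm hi))

theorem black_link (hM : IsMarking μ M) (hC : IsConnComp μ M C) {i j : ℕ}
    (h : V.white i j ∈ C) : V.black i j ∈ C := by
  obtain ⟨hμm, hi, hj⟩ := wfacts hM hC h
  exact black_push hM hC h ⟨hμm, hi⟩ (Or.inl (AdjAux.link hμm hi (by omega)))

theorem black_down (hM : IsMarking μ M) (hC : IsConnComp μ M C) {i j : ℕ}
    (h : V.white i j ∈ C) (hbox : (i + 1, j) ∈ μ) : V.black (i + 1) j ∈ C := by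
  obtain ⟨hμm, hi, hj⟩ := wfacts hM hC h
  exact black_push hM hC h ⟨hbox, by omega⟩ (Or.inl (AdjAux.vert hbox (by omega)))

/-- a white vertex with two distinct marked black neighbours, one of them in `C`,
belongs to `C`. -/
theorem white_force (hM : IsMarking μ M) (hC : IsConnComp μ M C) {i j p q p' q' : ℕ}
    (hij : (i, j) ∈ μ) (hj : 1 ≤ j)
    (h1 : V.black p q ∈ C) (h2 : V.black p' q' ∈ C)
    (hne : p ≠ p' ∨ q ≠ q')
    (a1 : Adj μ (V.white i j) (V.black p q))
    (a2 : Adj μ (V.white i j) (V.black p' q')) : V.white i j ∈ C := by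
  have hm : V.white i j ∈ M := by
    refine hM.white_mem _ trivial ⟨hij, hj⟩ ⟨_, hC.1 h1, _, hC.1 h2, ?_, a1, a2⟩
    simp only [ne_eq, V.black.injEq, not_and]
    rintro rfl
    omega
  exact hC.2.2 _ h1 _ ⟨hC.1 h1, hm, adj_symm a1⟩

/-- Rule 1: vertically adjacent whites in `C` force the white to the upper-left. -/
theorem ruleH1 (hM : IsMarking μ M) (hC : IsConnComp μ M C) {i j : ℕ}
    (h1 : V.white i (j + 1) ∈ C) (h2 : V.white (i + 1) (j + 1) ∈ C) :
    V.white i j ∈ C := by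
  obtain ⟨hμ1, hi, hj⟩ := wfacts hM hC h1
  obtain ⟨hμ2, -, -⟩ := wfacts hM hC h2
  have hij : (i, j) ∈ μ := μ.up_left_mem le_rfl (by omega) hμ1
  have hi1j : (i + 1, j) ∈ μ := μ.up_left_mem le_rfl (by omega) hμ2
  exact white_force hM hC hij (by omega) (black_left hM hC h1) (black_left hM hC h2)
    (Or.inl (by omega)) (Or.inl (AdjAux.link hij hi (by omega)))
    (Or.inl (AdjAux.vert hi1j (by omega)))

/-- Rule 2: a diagonally-below white forces the white to the right. -/
theorem ruleH2 (hM : IsMarking μ M) (hC : IsConnComp μ M C) {i j : ℕ}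
    (h1 : V.white i j ∈ C) (h2 : V.white (i + 1) (j + 1) ∈ C) :
    V.white i (j + 1) ∈ C := by
  obtain ⟨hμ1, hi, hj⟩ := wfacts hM hC h1
  obtain ⟨hμ2, -, -⟩ := wfacts hM hC h2
  have hij1 : (i, j + 1) ∈ μ := μ.up_left_mem (by omega) le_rfl hμ2
  exact white_force hM hC hij1 (by omega) (black_link hM hC h1) (black_link hM hC h2)
    (Or.inl (by omega)) (Or.inr (AdjAux.horiz hij1 hi))
    (Or.inl (AdjAux.vert hμ2 (by omega)))

/-- Rule 3: two horizontally adjacent whites force the white below-right. -/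
theorem ruleH3 (hM : IsMarking μ M) (hC : IsConnComp μ M C) {i j : ℕ}
    (h1 : V.white i j ∈ C) (h2 : V.white i (j + 1) ∈ C)
    (hbox : (i + 1, j + 1) ∈ μ) : V.white (i + 1) (j + 1) ∈ C := by
  obtain ⟨hμ1, hi, hj⟩ := wfacts hM hC h1
  have hb1 : V.black (i + 1) j ∈ C :=
    black_down hM hC h1 (μ.up_left_mem le_rfl (by omega) hbox)
  have hb2 : V.black (i + 1) (j + 1) ∈ C := black_down hM hC h2 hbox
  exact white_force hM hC hbox (by omega) hb1 hb2 (Or.inr (by omega))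
    (Or.inr (AdjAux.horiz hbox (by omega)))
    (Or.inl (AdjAux.link hbox (by omega) (by omega)))

end Aux
section Aux2

variable {μ : YoungDiagram} {M C : Set V}

theorem adj_ww {a b c d : ℕ} (h : Adj μ (V.white a b) (V.white c d)) :
    a = 0 ∧ c = 0 := by
  rcases h with h | h <;> cases h <;> simp_all

theorem adj_wb {a b p q : ℕ} (ha : 1 ≤ a) (h : Adj μ (V.white a b) (V.black p q)) :
    (a = p ∧ b = q) ∨ (a = p ∧ b = q + 1) ∨ (p = a + 1 ∧ q = b) := by
  rcases h with h | h <;> cases h <;> simp_all <;> omega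

theorem adj_bb {p q p' q' : ℕ} (h : Adj μ (V.black p q) (V.black p' q')) :
    q = 0 ∧ q' = 0 := by
  rcases h with h | h <;> cases h <;> simp_all

theorem conn_to_king (hM : IsMarking μ M) (hC : IsConnComp μ M C) {a b : ℕ}
    (ha : V.white a b ∈ C) {v : V}
    (h : Relation.ReflTransGen (AdjIn μ M) (V.white a b) v) :
    v ∈ C ∧
      (∀ c d, v = V.white c d → Relation.ReflTransGen (Kst C) (a, b) (c, d)) ∧
      (∀ p q, v = V.black p q →
        ∃ x y, V.white x y ∈ C ∧ Relation.ReflTransGen (Kst C) (a, b) (x, y) ∧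
          ((x = p ∧ y = q) ∨ (x = p ∧ y = q + 1) ∨ (p = x + 1 ∧ q = y))) := by
  induction h with
  | refl =>
    refine ⟨ha, ?_, ?_⟩
    · rintro c d hcd
      obtain ⟨rfl, rfl⟩ : a = c ∧ b = d := by
        injection hcd with h1 h2; exact ⟨h1, h2⟩
      exact Relation.ReflTransGen.refl
    · rintro p q hpq; cases hpq
  | tail hxy hstep ih =>
    rename_i b' c'
    obtain ⟨hbC, hw, hbk⟩ := ih
    obtain ⟨hbM, hcM, hadj⟩ := hstep
    have hc'C : c' ∈ C := hC.2.2 _ hbC _ ⟨hbM, hcM, hadj⟩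
    have hb'int := (hM.internal _ hbM).1
    have hc'int := (hM.internal _ hcM).1
    refine ⟨hc'C, ?_, ?_⟩
    · -- the case `c'` is white
      rintro c d rfl
      cases b' with
      | white e f =>
        exact absurd (adj_ww hadj).1 (by have := (wfacts hM hC hbC).2.1; omega)
      | black p q =>
        obtain ⟨x, y, hxyC, hrtg, hrel⟩ := hbk p q rfl
        have hx1 : 1 ≤ x := (wfacts hM hC hxyC).2.1
        have hc1 : 1 ≤ c := (wfacts hM hC hc'C).2.1
        have rel2 := adj_wb hc1 (adj_symm hadj)
        refine hrtg.tail ⟨hxyC, hc'C, ?_⟩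
        simp only [Drel]
        omega
      | bsource i => exact absurd hb'int (by simp [V.isInternal])
      | bsink j => exact absurd hb'int (by simp [V.isInternal])
    · -- the case `c'` is black
      rintro p q rfl
      cases b' with
      | white e f =>
        have he : 1 ≤ e := (wfacts hM hC hbC).2.1
        exact ⟨e, f, hbC, hw e f rfl, adj_wb he hadj⟩
      | black p' q' =>
        obtain ⟨x, y, hxyC, hrtg, hrel⟩ := hbk p' q' rfl
        have hy2 : 2 ≤ y := (wfacts hM hC hxyC).2.2
        have := adj_bb hadj
        omega
      | bsource i => exact absurd hb'int (by simp [V.isInternal])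
      | bsink j => exact absurd hb'int (by simp [V.isInternal])

/-- Chains of king moves with endpoints. -/
inductive KChain (C : Set V) : ℕ × ℕ → List (ℕ × ℕ) → ℕ × ℕ → Prop
  | nil (u : ℕ × ℕ) : KChain C u [] u
  | cons {u v w : ℕ × ℕ} {l : List (ℕ × ℕ)} (h : Kst C u v) (h' : KChain C v l w) :
      KChain C u (v :: l) w

theorem kchain_of_rtg {u v : ℕ × ℕ} (h : Relation.ReflTransGen (Kst C) u v) :
    ∃ l, KChain C u l v := by
  induction h using Relation.ReflTransGen.head_induction_on with
  | refl => exact ⟨[], KChain.nil v⟩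
  | head hst _ ih => obtain ⟨l, hl⟩ := ih; exact ⟨_ :: l, KChain.cons hst hl⟩

theorem kchain_last {u v : ℕ × ℕ} {l : List (ℕ × ℕ)} (h : KChain C u l v)
    (hu : WCo C u) : WCo C v := by
  induction h with
  | nil => exact hu
  | cons hst _ ih => exact ih hst.2.1

theorem drel_rows {a b : ℕ × ℕ} (h : Drel a b) :
    a.1 = b.1 ∨ a.1 + 1 = b.1 ∨ b.1 + 1 = a.1 := by
  rcases h with ⟨h, -⟩ | ⟨h, -⟩ | ⟨h, -⟩ <;> omega

theorem split_down (i : ℕ) :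
    ∀ (l : List (ℕ × ℕ)) (u v : ℕ × ℕ), KChain C u l v → i < u.1 → v.1 ≤ i →
      ∃ d' x' l₁ l₂, l = l₁ ++ ((i, x') :: l₂) ∧
        KChain C u l₁ (i + 1, d') ∧ Kst C (i + 1, d') (i, x') ∧
        KChain C (i, x') l₂ v := by
  intro l
  induction l with
  | nil =>
    intro u v h hu hv
    cases h; omega
  | cons w l' ihl =>
    intro u v h hu hv
    obtain ⟨u1, u2⟩ := u
    cases h with
    | cons hst h' =>
      obtain ⟨w1, w2⟩ := w
      by_cases hw : w1 ≤ i
      · have hrow := drel_rows hst.2.2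
        simp only at hrow
        obtain ⟨rfl, rfl⟩ : u1 = i + 1 ∧ w1 = i := by omega
        exact ⟨u2, w2, [], l', rfl, KChain.nil _, hst, h'⟩
      · obtain ⟨d', x', l₁, l₂, rfl, hc1, hk, hc2⟩ := ihl _ _ h' (by omega) hv
        exact ⟨d', x', (w1, w2) :: l₁, l₂, rfl, KChain.cons hst hc1, hk, hc2⟩

theorem split_up (i : ℕ) :
    ∀ (l : List (ℕ × ℕ)) (u v : ℕ × ℕ), KChain C u l v → u.1 ≤ i → i < v.1 →
      ∃ e' x' l₁ l₂, l = l₁ ++ ((i + 1, x') :: l₂) ∧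
        KChain C u l₁ (i, e') ∧ Kst C (i, e') (i + 1, x') ∧
        KChain C (i + 1, x') l₂ v := by
  intro l
  induction l with
  | nil =>
    intro u v h hu hv
    cases h; omega
  | cons w l' ihl =>
    intro u v h hu hv
    obtain ⟨u1, u2⟩ := u
    cases h with
    | cons hst h' =>
      obtain ⟨w1, w2⟩ := w
      by_cases hw : i < w1
      · have hrow := drel_rows hst.2.2
        simp only at hrow
        obtain ⟨rfl, rfl⟩ : u1 = i ∧ w1 = i + 1 := by omega
        exact ⟨u2, w2, [], l', rfl, KChain.nil _, hst, h'⟩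
      · obtain ⟨e', x', l₁, l₂, rfl, hc1, hk, hc2⟩ := ihl _ _ h' (by omega) hv
        exact ⟨e', x', (w1, w2) :: l₁, l₂, rfl, KChain.cons hst hc1, hk, hc2⟩

end Aux2
section Aux3

variable {μ : YoungDiagram} {M C : Set V}

theorem fill_right (hM : IsMarking μ M) (hC : IsConnComp μ M C) {i a hi' : ℕ}
    (base : V.white i a ∈ C)
    (hb : ∀ e, a + 1 ≤ e → e ≤ hi' → V.white (i + 1) e ∈ C) :
    ∀ t, a ≤ t → t ≤ hi' → V.white i t ∈ C := by
  intro t ht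
  induction t, ht using Nat.le_induction with
  | base => intro _; exact base
  | succ t ht ih =>
    intro h
    exact ruleH2 hM hC (ih (by omega)) (hb (t + 1) (by omega) h)

theorem fill_left (hM : IsMarking μ M) (hC : IsConnComp μ M C) {i a lo' : ℕ}
    (base : V.white i a ∈ C)
    (hb : ∀ e, lo' ≤ e → e ≤ a → V.white (i + 1) e ∈ C) :
    ∀ t, lo' ≤ t + 1 → t ≤ a → V.white i t ∈ C := by
  have key : ∀ k t, t + k = a → lo' ≤ t + 1 → V.white i t ∈ C := by
    intro k
    induction k with
    | zero =>
      intro t ht _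
      obtain rfl : t = a := by omega
      exact base
    | succ k ih =>
      intro t ht hlo
      have h1 : V.white i (t + 1) ∈ C := ih (t + 1) (by omega) (by omega)
      have h2 : V.white (i + 1) (t + 1) ∈ C := hb (t + 1) (by omega) (by omega)
      exact ruleH1 hM hC h1 h2
  intro t h1 h2
  exact key (a - t) t (by omega) h1

theorem FGG (hM : IsMarking μ M) (hC : IsConnComp μ M C) :
    ∀ n : ℕ, ∀ l : List (ℕ × ℕ), l.length ≤ n →
      ((∀ i x y, KChain C (i, x) l (i, y) → V.white i x ∈ C →
        ∀ t, min x y ≤ t → t ≤ max x y → V.white i t ∈ C) ∧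
      (∀ i d y, KChain C (i + 1, d) l (i, y) → V.white (i + 1) d ∈ C →
        ∀ t, min d y ≤ t → t ≤ max (d - 1) y → V.white i t ∈ C) ∧
      (∀ i e y, KChain C (i, e) l (i + 1, y) → V.white i e ∈ C →
        ∀ t, (i + 1, t) ∈ μ → min (e + 1) y ≤ t → t ≤ max e y →
          V.white (i + 1) t ∈ C)) := by
  intro n
  induction n using Nat.strong_induction_on with
  | _ n ih =>
  intro l hl
  -- helper to use the inductive hypothesis on strictly shorter lists
  have IH : ∀ l₂ : List (ℕ × ℕ), l₂.length < l.length →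
      ((∀ i x y, KChain C (i, x) l₂ (i, y) → V.white i x ∈ C →
        ∀ t, min x y ≤ t → t ≤ max x y → V.white i t ∈ C) ∧
      (∀ i d y, KChain C (i + 1, d) l₂ (i, y) → V.white (i + 1) d ∈ C →
        ∀ t, min d y ≤ t → t ≤ max (d - 1) y → V.white i t ∈ C) ∧
      (∀ i e y, KChain C (i, e) l₂ (i + 1, y) → V.white i e ∈ C →
        ∀ t, (i + 1, t) ∈ μ → min (e + 1) y ≤ t → t ≤ max e y →
          V.white (i + 1) t ∈ C)) := by
    intro l₂ h₂
    exact ih l₂.length (by omega) l₂ le_rfl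
  refine ⟨?_, ?_, ?_⟩
  · -- part F : chains between two whites of the same row
    intro i x y hch hx t ht1 ht2
    cases hch with
    | nil =>
      obtain rfl : t = x := by omega
      exact hx
    | cons hst hch' =>
      rename_i w l'
      obtain ⟨w1, w2⟩ := w
      have hwC : V.white w1 w2 ∈ C := hst.2.1
      have hdr := hst.2.2
      simp only [Drel] at hdr
      by_cases htx : t = x
      · exact htx ▸ hx
      rcases hdr with ⟨hr, hcol⟩ | ⟨hr, hcol⟩ | ⟨hr, hcol⟩
      · -- same-row step
        rw [show w1 = i by omega] at hch' hwC
        exact (IH l' (by simp)).1 i w2 y hch' hwC t (by omega) (by omega)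
      · -- step down to row i+1
        rw [show w1 = i + 1 by omega] at hch' hwC
        exact (IH l' (by simp)).2.1 i w2 y hch' hwC t (by omega) (by omega)
      · -- step up to row i-1
        have hy : V.white i y ∈ C := kchain_last (KChain.cons hst hch') hx
        rw [hr] at hx hy ⊢
        rw [hr] at hch'
        have hμx : (w1 + 1, x) ∈ μ := (wfacts hM hC hx).1
        have hμy : (w1 + 1, y) ∈ μ := (wfacts hM hC hy).1
        have hμt : (w1 + 1, t) ∈ μ := by
          by_cases hxx : t ≤ x
          · exact μ.up_left_mem le_rfl hxx hμx
          · exact μ.up_left_mem le_rfl (by omega) hμy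
        exact (IH l' (by simp)).2.2 w1 w2 y hch' hwC t hμt (by omega) (by omega)
  · -- part G : chains from row i+1 down-start to row i
    intro i d y hch hd t ht1 ht2
    obtain ⟨d', x', l₁, l₂, rfl, hc1, hk, hc2⟩ :=
      split_down i l (i + 1, d) (i, y) hch (by simp) (by simp)
    have hlen1 : l₁.length < (l₁ ++ ((i, x') :: l₂)).length := by simp
    have hlen2 : l₂.length < (l₁ ++ ((i, x') :: l₂)).length := by simp; omega
    have hI : ∀ s, min d d' ≤ s → s ≤ max d d' → V.white (i + 1) s ∈ C :=
      fun s h1 h2 => (IH l₁ hlen1).1 (i + 1) d d' hc1 hd s h1 h2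
    have hx'C : V.white i x' ∈ C := hk.2.1
    have hdr := hk.2.2
    simp only [Drel] at hdr
    have hT : ∀ s, min x' y ≤ s → s ≤ max x' y → V.white i s ∈ C :=
      fun s h1 h2 => (IH l₂ hlen2).1 i x' y hc2 hx'C s h1 h2
    have hR : ∀ s, x' ≤ s → s ≤ max d d' → V.white i s ∈ C :=
      fill_right hM hC hx'C (fun e he1 he2 => hI e (by omega) he2)
    have hL : ∀ s, min d d' ≤ s + 1 → s ≤ x' → V.white i s ∈ C :=
      fill_left hM hC hx'C (fun e he1 he2 => hI e he1 (by omega))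
    by_cases hmid : min x' y ≤ t ∧ t ≤ max x' y
    · exact hT t hmid.1 hmid.2
    by_cases hr : x' ≤ t
    · exact hR t hr (by omega)
    · exact hL t (by omega) (by omega)
  · -- part G' : chains from row i up-start to row i+1
    intro i e y hch he t htμ ht1 ht2
    obtain ⟨e', x', l₁, l₂, rfl, hc1, hk, hc2⟩ :=
      split_up i l (i, e) (i + 1, y) hch (by simp) (by simp)
    have hlen1 : l₁.length < (l₁ ++ ((i + 1, x') :: l₂)).length := by simp
    have hlen2 : l₂.length < (l₁ ++ ((i + 1, x') :: l₂)).length := by simp; omega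
    have hI : ∀ s, min e e' ≤ s → s ≤ max e e' → V.white i s ∈ C :=
      fun s h1 h2 => (IH l₁ hlen1).1 i e e' hc1 he s h1 h2
    have hx'C : V.white (i + 1) x' ∈ C := hk.2.1
    have hdr := hk.2.2
    simp only [Drel] at hdr
    have hT : ∀ s, min x' y ≤ s → s ≤ max x' y → V.white (i + 1) s ∈ C :=
      fun s h1 h2 => (IH l₂ hlen2).1 (i + 1) x' y hc2 hx'C s h1 h2
    have hF : ∀ s, min e e' + 1 ≤ s → s ≤ max e e' → (i + 1, s) ∈ μ →
        V.white (i + 1) s ∈ C := by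
      intro s hs1 hs2 hsμ
      obtain ⟨j, rfl⟩ : ∃ j, s = j + 1 := ⟨s - 1, by omega⟩
      exact ruleH3 hM hC (hI j (by omega) (by omega)) (hI (j + 1) (by omega) hs2) hsμ
    by_cases hmid : min x' y ≤ t ∧ t ≤ max x' y
    · exact hT t hmid.1 hmid.2
    · exact hF t (by omega) (by omega) htμ

end Aux3
section Aux4

variable {μ : YoungDiagram} {M C : Set V}

theorem king_conn (hM : IsMarking μ M) (hC : IsConnComp μ M C) {i j i' j' : ℕ}
    (h1 : V.white i j ∈ C) (h2 : V.white i' j' ∈ C) :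
    Relation.ReflTransGen (Kst C) (i, j) (i', j') := by
  have hr := hC.2.1 _ h1 _ h2
  exact (conn_to_king hM hC h1 hr).2.1 i' j' rfl

theorem row_interval (hM : IsMarking μ M) (hC : IsConnComp μ M C) {i d₁ d₂ : ℕ}
    (h1 : V.white i d₁ ∈ C) (h2 : V.white i d₂ ∈ C) :
    ∀ d, d₁ ≤ d → d ≤ d₂ → V.white i d ∈ C := by
  intro d hd1 hd2
  obtain ⟨l, hl⟩ := kchain_of_rtg (king_conn hM hC h1 h2)
  exact (FGG hM hC l.length l le_rfl).1 i d₁ d₂ hl h1 d (by omega) (by omega)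

theorem king_ivt (hM : IsMarking μ M) (hC : IsConnComp μ M C) {u v : ℕ × ℕ}
    (h : Relation.ReflTransGen (Kst C) u v) (hu : WCo C u) :
    ∀ i, u.1 ≤ i → i ≤ v.1 → ∃ d, V.white i d ∈ C := by
  induction h with
  | refl =>
    intro i h1 h2
    obtain rfl : i = u.1 := by omega
    exact ⟨u.2, hu⟩
  | tail h' hst ih =>
    intro i h1 h2
    rename_i b c
    have hrow := drel_rows hst.2.2
    by_cases hib : i ≤ b.1
    · exact ih i h1 hib
    · obtain rfl : i = c.1 := by omega
      exact ⟨c.2, hst.2.1⟩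

theorem drop_lemma (hM : IsMarking μ M) (hC : IsConnComp μ M C) {i k y : ℕ}
    (hk : V.white (i + 1) k ∈ C) (hy : V.white i y ∈ C) :
    V.white i k ∈ C ∧ V.white i (k - 1) ∈ C := by
  have hk2 : 2 ≤ k := (wfacts hM hC hk).2.2
  obtain ⟨l, hl⟩ := kchain_of_rtg (king_conn hM hC hk hy)
  have hG := (FGG hM hC l.length l le_rfl).2.1 i k y hl hk
  obtain ⟨j, rfl⟩ : ∃ j, k = j + 1 := ⟨k - 1, by omega⟩
  by_cases hyk : j + 1 ≤ y
  · have hik : V.white i (j + 1) ∈ C := hG (j + 1) (by omega) (by omega)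
    exact ⟨hik, by simpa using ruleH1 hM hC hik hk⟩
  · have hij : V.white i j ∈ C := hG j (by omega) (by omega)
    exact ⟨ruleH2 hM hC hij hk, by simpa using hij⟩

theorem row_set_eq (C : Set V) (i : ℕ) :
    {v : V | v ∈ C ∧ v.isWhite ∧ v.row = i} =
      (fun j => V.white i j) '' {j | V.white i j ∈ C} := by
  ext v
  constructor
  · rintro ⟨hv, hw, hr⟩
    cases v with
    | white a b =>
      obtain rfl : a = i := hr
      exact ⟨b, hv, rfl⟩
    | black a b => exact absurd hw (by simp [V.isWhite])
    | bsource a => exact absurd hw (by simp [V.isWhite])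
    | bsink a => exact absurd hw (by simp [V.isWhite])
  · rintro ⟨j, hj, rfl⟩
    exact ⟨hj, trivial, rfl⟩

end Aux4
/-- every nonempty connected component `C` of a marking `M` of the trivalent
Le-graph of the totally positive Schubert cell of shape `μ` has triangular shape:
(a) the rows containing white vertices of `C` form a set of consecutive rows;
(b) in each row the white vertices of `C` are consecutive white vertices of that row;
(c) whenever rows `i` and `i+1` both contain white vertices of `C`, the number of white
vertices of `C` in row `i+1` is strictly smaller than that in row `i`. -/
theorem component_triangular (μ : YoungDiagram) (hμ : μ.cells.Nonempty)
    (M : Set V) (hM : IsMarking μ M) (C : Set V) (hC : IsConnComp μ M C)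
    (hCne : C.Nonempty) :
    (∀ i₁ i i₂ : ℕ, i₁ ≤ i → i ≤ i₂ →
      (∃ d, V.white i₁ d ∈ C) → (∃ d, V.white i₂ d ∈ C) → ∃ d, V.white i d ∈ C) ∧
    (∀ i d₁ d d₂ : ℕ, d₁ ≤ d → d ≤ d₂ →
      V.white i d₁ ∈ C → V.white i d₂ ∈ C → V.white i d ∈ C) ∧
    (∀ i : ℕ, (∃ d, V.white i d ∈ C) → (∃ d, V.white (i + 1) d ∈ C) →
      {v : V | v ∈ C ∧ v.isWhite ∧ v.row = i + 1}.ncard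
        < {v : V | v ∈ C ∧ v.isWhite ∧ v.row = i}.ncard) := by
  refine ⟨?_, ?_, ?_⟩
  · -- (a) consecutive rows
    rintro i₁ i i₂ h1 h2 ⟨d, hd⟩ ⟨d₂, hd₂⟩
    exact king_ivt hM hC (king_conn hM hC hd hd₂) hd i h1 h2
  · -- (b) intervals in each row
    intro i d₁ d d₂ h1 h2 hd₁ hd₂
    exact row_interval hM hC hd₁ hd₂ d h1 h2
  · -- (c) strict decrease
    rintro i ⟨d, hdi⟩ ⟨d', hdi'⟩
    set S : Set ℕ := {j | V.white i j ∈ C} with hS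
    set S' : Set ℕ := {j | V.white (i + 1) j ∈ C} with hS'
    have hSfin : S.Finite := by
      refine Set.Finite.subset (Set.finite_Iio (μ.rowLen i)) ?_
      intro j hj
      exact YoungDiagram.mem_iff_lt_rowLen.mp (wfacts hM hC hj).1
    have hsub : S' ⊆ S := fun k hk => (drop_lemma hM hC hk hdi).1
    have hS'ne : S'.Nonempty := ⟨d', hdi'⟩
    set k₀ := sInf S' with hk₀
    have hk₀S' : k₀ ∈ S' := Nat.sInf_mem hS'ne
    have hk₀2 : 2 ≤ k₀ := (wfacts hM hC hk₀S').2.2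
    have hmem : k₀ - 1 ∈ S := (drop_lemma hM hC hk₀S' hdi).2
    have hnot : k₀ - 1 ∉ S' := fun h => by
      have := Nat.sInf_le h; omega
    have hss : S' ⊂ S := (Set.ssubset_iff_of_subset hsub).mpr ⟨k₀ - 1, hmem, hnot⟩
    have hcard : S'.ncard < S.ncard := Set.ncard_lt_ncard hss hSfin
    have hinj : ∀ r : ℕ, Function.Injective (fun j => V.white r j) := by
      intro r x y h
      injection h
    rw [row_set_eq C (i + 1), row_set_eq C i,
      Set.ncard_image_of_injective _ (hinj (i + 1)),
      Set.ncard_image_of_injective _ (hinj i)]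
    exact hcard

end LeGraph
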